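/- μ-intersection-linkedness is hereditary under complete embeddings: if ι : P → Q is a complete embedding of forcing notions and Q is μ-intersection-linked, then P is μ-intersection-linked; moreover, if ι is a dense embedding and P is μ-intersection-linked, then Q is μ-intersection-linked. -/

import Mathlib

/-!
Along a monotone map, a common lower bound of finitely many conditions maps to a common lower
bound of their images, so pushing each witnessing set of `P` forward and closing it upward cannot
lower its intersection number; density of the image keeps the union of these sets dense.

Conversely, pull back the upward closure of each witnessing set of `Q`. If `s` lies below
`ι p₁, …, ι pₖ`, fix `r₀ ∈ P` such that `ι r` is compatible with `s` for every `r ≤ r₀`;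
descending from `r₀` one `pⱼ` at a time, using that `ι` reflects compatibility, one finds a
common lower bound of `p₁, …, pₖ`. Since `sInf ∅ = 0`, a pulled-back set that happens to be empty has intersection
number `0` and is replaced by a singleton, whose intersection number is `1`.
-/

/-- The intersection index `i_*(q̄)`: the maximal size of a set `F ⊆ n` such that
`{q i : i ∈ F}` has a lower bound in `P`. -/
noncomputable def iStar {P : Type*} [Preorder P] {n : ℕ} (q : Fin n → P) : ℕ :=
  sSup {k | ∃ F : Finset (Fin n), (∃ r, ∀ i ∈ F, r ≤ q i) ∧ F.card = k}

/-- The intersection number of `Q` in the forcing notion `P`: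
`inf { i_*(q̄)/n : q̄ ∈ Qⁿ, n ≥ 1 }`. -/
noncomputable def intNum (P : Type*) [Preorder P] (Q : Set P) : ℝ :=
  sInf {x | ∃ n : ℕ, 0 < n ∧ ∃ q : Fin n → P, (∀ i, q i ∈ Q) ∧ x = (iStar q : ℝ) / n}

/-- Compatibility in a preorder. -/
def Compat {P : Type*} [Preorder P] (p q : P) : Prop := ∃ r, r ≤ p ∧ r ≤ q

/-- `P` is intersection-linked with witnessing sets indexed by `I`. -/
def IntLinked (P : Type*) [Preorder P] (I : Type*) : Prop :=
  ∃ Q : I → ℚ → Set P,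
    (∀ i, ∀ ε : ℚ, 0 < ε → ε < 1 → (1 - (ε : ℝ)) ≤ intNum P (Q i ε)) ∧
    (∀ ε : ℚ, 0 < ε → ε < 1 → ∀ p : P, ∃ q, (∃ i, q ∈ Q i ε) ∧ q ≤ p)

section IntersectionNumber

variable {P Q : Type*} [Preorder P] [Preorder Q]

lemma mem_upperBounds_iStar_set {n : ℕ} (q : Fin n → P) :
    n ∈ upperBounds {k | ∃ F : Finset (Fin n), (∃ r, ∀ i ∈ F, r ≤ q i) ∧ F.card = k} :=
  fun _ ⟨F, _, hF⟩ => hF ▸ (Finset.card_le_univ F).trans_eq (Fintype.card_fin n)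

lemma iStar_le_iStar {n : ℕ} (q : Fin n → Q) (p : Fin n → P)
    (h : ∀ F : Finset (Fin n), (∃ s, ∀ j ∈ F, s ≤ q j) → ∃ t, ∀ j ∈ F, t ≤ p j) :
    iStar q ≤ iStar p :=
  csSup_le_csSup' ⟨n, mem_upperBounds_iStar_set p⟩ fun _ ⟨F, hF, hcard⟩ => ⟨F, h F hF, hcard⟩

lemma iStar_eq_of_forall_le {n : ℕ} {q : Fin n → P} {r : P} (hr : ∀ i, r ≤ q i) :
    iStar q = n :=
  IsGreatest.csSup_eq
    ⟨⟨Finset.univ, ⟨r, fun i _ => hr i⟩, Finset.card_fin n⟩, mem_upperBounds_iStar_set q⟩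

lemma intNum_le_iStar_div (S : Set P) {n : ℕ} (hn : 0 < n) {q : Fin n → P}
    (hq : ∀ i, q i ∈ S) : intNum P S ≤ (iStar q : ℝ) / n :=
  csInf_le ⟨0, by rintro _ ⟨n, -, q, -, rfl⟩; positivity⟩ ⟨n, hn, q, hq, rfl⟩

lemma le_intNum {S : Set P} (hS : S.Nonempty) {c : ℝ}
    (h : ∀ n, 0 < n → ∀ q : Fin n → P, (∀ i, q i ∈ S) → c ≤ (iStar q : ℝ) / n) :
    c ≤ intNum P S := by
  obtain ⟨p, hp⟩ := hS
  refine le_csInf ⟨_, 1, one_pos, fun _ => p, fun _ => hp, rfl⟩ ?_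
  rintro _ ⟨n, hn, q, hq, rfl⟩
  exact h n hn q hq

lemma nonempty_of_pos_le_intNum {S : Set P} {c : ℝ} (hc : 0 < c) (h : c ≤ intNum P S) :
    S.Nonempty := by
  by_contra hS
  have hempty : {x | ∃ n : ℕ, 0 < n ∧ ∃ q : Fin n → P, (∀ i, q i ∈ S) ∧
      x = (iStar q : ℝ) / n} = ∅ := by
    refine Set.eq_empty_of_forall_notMem ?_
    rintro _ ⟨n, hn, q, hq, -⟩
    exact hS ⟨q ⟨0, hn⟩, hq _⟩
  rw [intNum, hempty, Real.sInf_empty] at h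
  linarith

lemma one_le_intNum_singleton (p : P) : 1 ≤ intNum P {p} := by
  refine le_intNum (Set.singleton_nonempty p) fun n hn q hq => ?_
  rw [iStar_eq_of_forall_le (r := p) fun i => (hq i).ge, div_self (by positivity)]

lemma intNum_le_intNum {S : Set P} {T : Set Q} (hS : S.Nonempty)
    (h : ∀ n (p : Fin n → P), (∀ i, p i ∈ S) →
      ∃ q : Fin n → Q, (∀ i, q i ∈ T) ∧ iStar q ≤ iStar p) :
    intNum Q T ≤ intNum P S := by
  refine le_intNum hS fun n hn p hp => ?_
  obtain ⟨q, hqT, hqp⟩ := h n p hp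
  calc intNum Q T ≤ (iStar q : ℝ) / n := intNum_le_iStar_div T hn hqT
    _ ≤ (iStar p : ℝ) / n := by gcongr

end IntersectionNumber

section Embedding

variable {P Q : Type*} [Preorder P] [Preorder Q] (ι : P → Q)

lemma intNum_le_intNum_upperClosure_image (hmono : Monotone ι) {R : Set P}
    (hR : R.Nonempty) : intNum P R ≤ intNum Q (upperClosure (ι '' R)) := by
  refine intNum_le_intNum (hR.image ι |>.mono subset_upperClosure) fun n q hq => ?_
  have hlift : ∀ j, ∃ p ∈ R, ι p ≤ q j := fun j => by
    obtain ⟨_, ⟨p, hpR, rfl⟩, hpq⟩ := mem_upperClosure.mp (hq j)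
    exact ⟨p, hpR, hpq⟩
  choose p hpR hpq using hlift
  refine ⟨p, hpR, iStar_le_iStar _ _ fun F ⟨t, ht⟩ => ⟨ι t, fun j hj => ?_⟩⟩
  exact (hmono (ht j hj)).trans (hpq j)

lemma exists_le_of_reduction (hcompat : ∀ a b : P, Compat a b ↔ Compat (ι a) (ι b))
    {s : Q} {r₀ : P} (hr₀ : ∀ r ≤ r₀, Compat (ι r) s) {α : Type*} (p : α → P)
    (F : Finset α) (hs : ∀ j ∈ F, s ≤ ι (p j)) :
    ∃ t ≤ r₀, ∀ j ∈ F, t ≤ p j := by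
  classical
  induction F using Finset.induction_on with
  | empty => exact ⟨r₀, le_rfl, by simp⟩
  | insert j F _ ih =>
    obtain ⟨t, htr₀, htF⟩ := ih fun k hk => hs k (Finset.mem_insert_of_mem hk)
    obtain ⟨u, hut, hus⟩ := hr₀ t htr₀
    obtain ⟨t', ht't, ht'j⟩ : Compat t (p j) :=
      (hcompat _ _).mpr ⟨u, hut, hus.trans (hs j (Finset.mem_insert_self j F))⟩
    refine ⟨t', ht't.trans htr₀, fun k hk => ?_⟩
    rcases Finset.mem_insert.mp hk with rfl | hk
    · exact ht'j
    · exact ht't.trans (htF k hk)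

lemma intNum_le_intNum_preimage_upperClosure
    (hcompat : ∀ a b : P, Compat a b ↔ Compat (ι a) (ι b))
    (hred : ∀ q : Q, ∃ r : P, ∀ r' ≤ r, Compat (ι r') q) {T : Set Q}
    (hne : (ι ⁻¹' upperClosure T).Nonempty) :
    intNum Q T ≤ intNum P (ι ⁻¹' upperClosure T) := by
  refine intNum_le_intNum hne fun n p hp => ?_
  choose q hqT hqp using fun j => mem_upperClosure.mp (hp j)
  refine ⟨q, hqT, iStar_le_iStar _ _ fun F ⟨s, hs⟩ => ?_⟩
  obtain ⟨r₀, hr₀⟩ := hred s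
  obtain ⟨t, -, ht⟩ := exists_le_of_reduction ι hcompat hr₀ p F
    fun j hj => (hs j hj).trans (hqp j)
  exact ⟨t, ht⟩

end Embedding

section IntLinked

variable {P Q : Type*} [Preorder P] [Preorder Q] {I : Type*}

lemma IntLinked.of_nonempty_witnesses [Nonempty P] (S : I → ℚ → Set P)
    (hint : ∀ i (ε : ℚ), 0 < ε → ε < 1 → (S i ε).Nonempty → 1 - (ε : ℝ) ≤ intNum P (S i ε))
    (hdense : ∀ ε : ℚ, 0 < ε → ε < 1 → ∀ p : P, ∃ q, (∃ i, q ∈ S i ε) ∧ q ≤ p) :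
    IntLinked P I := by
  classical
  obtain ⟨p₀⟩ := ‹Nonempty P›
  refine ⟨fun i ε => if (S i ε).Nonempty then S i ε else {p₀}, fun i ε hε hε' => ?_,
    fun ε hε hε' p => ?_⟩
  · dsimp only
    split_ifs with hne
    · exact hint i ε hε hε' hne
    · exact (sub_le_self 1 (by exact_mod_cast hε.le)).trans (one_le_intNum_singleton p₀)
  · obtain ⟨q, ⟨i, hq⟩, hqp⟩ := hdense ε hε hε' p
    exact ⟨q, ⟨i, by dsimp only; rwa [if_pos ⟨q, hq⟩]⟩, hqp⟩

lemma IntLinked.isEmpty_index [IsEmpty P] (h : IntLinked P I) : IsEmpty I := by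
  obtain ⟨S, hint, -⟩ := h
  refine ⟨fun i => ?_⟩
  obtain ⟨p, -⟩ :=
    nonempty_of_pos_le_intNum (by norm_num) (hint i (1 / 2) (by norm_num) (by norm_num))
  exact isEmptyElim p

lemma intLinked_of_isEmpty [IsEmpty P] [IsEmpty I] : IntLinked P I :=
  ⟨fun _ _ => ∅, fun i => isEmptyElim i, fun _ _ _ p => isEmptyElim p⟩

lemma IntLinked.of_denseEmbedding (ι : P → Q) (hmono : Monotone ι)
    (hdense : ∀ q : Q, ∃ p : P, ι p ≤ q) (h : IntLinked P I) : IntLinked Q I := by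
  obtain ⟨R, hint, hRdense⟩ := h
  refine ⟨fun i ε => upperClosure (ι '' R i ε), fun i ε hε hε' => ?_, fun ε hε hε' q => ?_⟩
  · have hne :=
      nonempty_of_pos_le_intNum (sub_pos.mpr (by exact_mod_cast hε')) (hint i ε hε hε')
    exact (hint i ε hε hε').trans (intNum_le_intNum_upperClosure_image ι hmono hne)
  · obtain ⟨p, hpq⟩ := hdense q
    obtain ⟨p', ⟨i, hp'⟩, hp'p⟩ := hRdense ε hε hε' p
    exact ⟨ι p', ⟨i, subset_upperClosure (Set.mem_image_of_mem ι hp')⟩,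
      (hmono hp'p).trans hpq⟩

lemma IntLinked.of_completeEmbedding (ι : P → Q)
    (hcompat : ∀ a b : P, Compat a b ↔ Compat (ι a) (ι b))
    (hred : ∀ q : Q, ∃ r : P, ∀ r' ≤ r, Compat (ι r') q) (h : IntLinked Q I) :
    IntLinked P I := by
  rcases isEmpty_or_nonempty P with hP | hP
  · have : IsEmpty Q := ⟨fun q => isEmptyElim (hred q).choose⟩
    have := h.isEmpty_index
    exact intLinked_of_isEmpty
  obtain ⟨T, hint, hTdense⟩ := h
  refine .of_nonempty_witnesses (fun i ε => ι ⁻¹' upperClosure (T i ε))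
    (fun i ε hε hε' hne => (hint i ε hε hε').trans
      (intNum_le_intNum_preimage_upperClosure ι hcompat hred hne)) fun ε hε hε' p => ?_
  obtain ⟨q, ⟨i, hq⟩, hqp⟩ := hTdense ε hε hε' (ι p)
  exact ⟨p, ⟨i, mem_upperClosure.mpr ⟨q, hq, hqp⟩⟩, le_rfl⟩

end IntLinked

theorem intLinked_hereditary {P Q : Type*} [Preorder P] [Preorder Q] (I : Type*)
    (ι : P → Q)
    (hmono : ∀ a b : P, a ≤ b → ι a ≤ ι b)
    (hcompat : ∀ a b : P, Compat a b ↔ Compat (ι a) (ι b)) :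
    ((∀ q : Q, ∃ r : P, ∀ r' ≤ r, Compat (ι r') q) →
      IntLinked Q I → IntLinked P I) ∧
    ((∀ q : Q, ∃ p : P, ι p ≤ q) →
      IntLinked P I → IntLinked Q I) :=
  ⟨IntLinked.of_completeEmbedding ι hcompat,
    IntLinked.of_denseEmbedding ι fun a b => hmono a b⟩
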